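/- Let m, n, d be positive integers with n ≥ 2, and let g_1, …, g_n ∈ ℂ[z_1, …, z_m] each have total degree at most d. If 2^n ≥ (2nd)^m, then there exists a nonzero multilinear polynomial A ∈ ℂ[x_1, …, x_n] (i.e., of degree at most 1 in each variable) such that A(g_1, …, g_n) is the zero polynomial in ℂ[z_1, …, z_m]. -/

import Mathlib

/-!
A multilinear polynomial in `n` variables is a vector in a space of dimension `2^n`, while
substituting polynomials of degree at most `d` sends it, linearly, into the polynomials in `m`
variables of degree at most `n * d`, which lie in a space of dimension at most `(n * d + 1)^m`.
Since `n * d + 1 < 2 * n * d`, the hypothesis makes the target dimension smaller, so the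
substitution map has a nonzero kernel.
-/

namespace MvPolynomial

variable {R K σ τ : Type*}

noncomputable def exponentsLeEquivFun [Finite σ] (k : ℕ) :
    {s : σ →₀ ℕ | ∀ i, s i ≤ k} ≃ (σ → Fin (k + 1)) where
  toFun s i := ⟨s.1 i, Nat.lt_succ_of_le (s.2 i)⟩
  invFun f := ⟨Finsupp.equivFunOnFinite.symm fun i => f i, fun i => Fin.is_le (f i)⟩
  left_inv s := by ext; simp
  right_inv f := by ext; simp

theorem finrank_restrictDegree [CommRing R] [Nontrivial R] [Fintype σ] (k : ℕ) :
    Module.finrank R (restrictDegree σ R k) = (k + 1) ^ Fintype.card σ := by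
  rw [restrictDegree, Module.finrank_eq_nat_card_basis (basisRestrictSupport R _),
    Nat.card_congr (exponentsLeEquivFun k), Nat.card_fun, Nat.card_eq_fintype_card (α := σ),
    Nat.card_fin]

theorem totalDegree_le_of_mem_restrictDegree [CommSemiring R] [Fintype σ] {k : ℕ}
    {A : MvPolynomial σ R} (hA : A ∈ restrictDegree σ R k) :
    A.totalDegree ≤ Fintype.card σ * k := by
  rw [totalDegree, Finset.sup_le_iff]
  intro s hs
  calc (s.sum fun _ e => e) = ∑ i, s i := Finsupp.sum_fintype _ _ fun _ => rfl
    _ ≤ ∑ _ : σ, k := Finset.sum_le_sum fun i _ => (mem_restrictDegree σ A k).1 hA s hs i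
    _ = Fintype.card σ * k := by simp

theorem totalDegree_aeval_le [CommSemiring R] {g : σ → MvPolynomial τ R} {d : ℕ}
    (hg : ∀ i, (g i).totalDegree ≤ d) (A : MvPolynomial σ R) :
    (aeval g A).totalDegree ≤ A.totalDegree * d := by
  conv_lhs => rw [A.as_sum, map_sum]
  refine totalDegree_finsetSum_le fun s hs => ?_
  rw [aeval_monomial]
  calc (algebraMap R (MvPolynomial τ R) (coeff s A) * s.prod fun i e => g i ^ e).totalDegree
      ≤ ∑ i ∈ s.support, s i * d := by
        refine (totalDegree_mul _ _).trans ?_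
        rw [algebraMap_eq, totalDegree_C, zero_add]
        refine (totalDegree_finsetProd _ _).trans (Finset.sum_le_sum fun i _ => ?_)
        exact (totalDegree_pow _ _).trans (Nat.mul_le_mul_left _ (hg i))
    _ = s.sum (fun _ e => e) * d := by rw [Finsupp.sum, Finset.sum_mul]
    _ ≤ A.totalDegree * d := Nat.mul_le_mul_right d (le_totalDegree hs)

theorem aeval_mem_restrictTotalDegree [CommSemiring R] [Fintype σ] {g : σ → MvPolynomial τ R}
    {k d : ℕ} (hg : ∀ i, (g i).totalDegree ≤ d) {A : MvPolynomial σ R}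
    (hA : A ∈ restrictDegree σ R k) :
    aeval g A ∈ restrictTotalDegree τ R (Fintype.card σ * k * d) :=
  (mem_restrictTotalDegree τ _ _).2 <|
    (totalDegree_aeval_le hg A).trans
      (Nat.mul_le_mul_right d (totalDegree_le_of_mem_restrictDegree hA))

theorem exists_ne_zero_mem_restrictDegree_aeval_eq_zero [Field K] [Fintype σ] [Fintype τ]
    {g : σ → MvPolynomial τ K} {k d : ℕ} (hg : ∀ i, (g i).totalDegree ≤ d)
    (hcount : (Fintype.card σ * k * d + 1) ^ Fintype.card τ < (k + 1) ^ Fintype.card σ) :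
    ∃ A ∈ restrictDegree σ K k, A ≠ 0 ∧ aeval g A = 0 := by
  let F := (aeval g).toLinearMap.restrict fun A hA => aeval_mem_restrictTotalDegree (k := k) hg hA
  have hdim : Module.finrank K (restrictTotalDegree τ K (Fintype.card σ * k * d))
      < Module.finrank K (restrictDegree σ K k) :=
    calc _ ≤ Module.finrank K (restrictDegree τ K (Fintype.card σ * k * d)) :=
          Submodule.finrank_mono (restrictTotalDegree_le_restrictDegree τ K _)
      _ < _ := by rwa [finrank_restrictDegree, finrank_restrictDegree]
  obtain ⟨⟨A, hA⟩, hker, hA0⟩ :=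
    (Submodule.ne_bot_iff _).1 (LinearMap.ker_ne_bot_of_finrank_lt (f := F) hdim)
  exact ⟨A, hA, by simpa using hA0, congrArg Subtype.val (LinearMap.mem_ker.1 hker)⟩

end MvPolynomial

open MvPolynomial

/-- The `D = 2` instance of the dimension count in Lemma 3.1: if `2^n ≥ (2nd)^m`
then the map `(g_1, …, g_n)` admits a nonzero multilinear annihilator. -/
theorem multilinear_annihilator_of_dimension_count
    (m n d : ℕ) (hm : 1 ≤ m) (hn : 2 ≤ n) (hd : 1 ≤ d)
    (g : Fin n → MvPolynomial (Fin m) ℂ)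
    (hg : ∀ i, (g i).totalDegree ≤ d)
    (hcount : (2 * n * d) ^ m ≤ 2 ^ n) :
    ∃ A : MvPolynomial (Fin n) ℂ, A ≠ 0 ∧ (∀ i, A.degreeOf i ≤ 1) ∧
      MvPolynomial.aeval g A = 0 := by
  have hnd : 2 ≤ n * d := hn.trans (Nat.le_mul_of_pos_right n hd)
  have hdim : (n * d + 1) ^ m < 2 ^ n :=
    calc (n * d + 1) ^ m < (2 * n * d) ^ m :=
          Nat.pow_lt_pow_left (by rw [mul_assoc]; omega) (by omega)
      _ ≤ 2 ^ n := hcount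
  obtain ⟨A, hA, hA0, hAg⟩ :=
    exists_ne_zero_mem_restrictDegree_aeval_eq_zero (k := 1) hg (by simpa using hdim)
  exact ⟨A, hA0, fun i => degreeOf_le_iff.2 fun s hs => (mem_restrictDegree _ A 1).1 hA s hs i,
    hAg⟩
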